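/- arXiv:1711.03217 — 5 statements merged into one kernel-verified Lean document; each statement's English description precedes it below -/
import Mathlib

section
/- Every good subset of a regular topological space is compact. Here, given a fixed winning strategy σ for Bob in the long finite-selection open-cover game of length κ on a space X, a set K ⊆ X is called good if there exists a partial play s (a sequence of open covers of length < κ) such that K equals the intersection over all open covers C of X of the closures of the unions of Bob's responses σ(s⌢C). -/
universe u

/-- A family of sets is an open cover: all members are open and their union is the whole space. -/
def IsOpenCover {X : Type u} [TopologicalSpace X] (𝒞 : Set (Set X)) : Prop :=
  (∀ U ∈ 𝒞, IsOpen U) ∧ ⋃₀ 𝒞 = Set.univ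

/-- A strategy for Bob in the game `G_fin^κ(O,O)`: at inning `ξ < κ`, given the history of
Alice's previous moves and Alice's current open cover `𝒞`, Bob picks a finite subfamily of `𝒞`. -/
structure BobStratFin (X : Type u) [TopologicalSpace X] (κ : Ordinal.{u}) where
  move : ∀ ξ : Ordinal.{u}, ξ < κ → (∀ α : Ordinal.{u}, α < ξ → Set (Set X)) →
    Set (Set X) → Finset (Set X)
  subset : ∀ ξ hξ hist 𝒞, (↑(move ξ hξ hist 𝒞) : Set (Set X)) ⊆ 𝒞

/-- The strategy is winning: against every play of open covers by Alice, the union of all of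
Bob's finite selections covers the space. -/
def BobStratFin.Winning {X : Type u} [TopologicalSpace X] {κ : Ordinal.{u}}
    (S : BobStratFin X κ) : Prop :=
  ∀ f : ∀ ξ : Ordinal.{u}, ξ < κ → Set (Set X),
    (∀ ξ hξ, IsOpenCover (f ξ hξ)) →
    (⋃ ξ, ⋃ hξ : ξ < κ,
      ⋃₀ (↑(S.move ξ hξ (fun α hα => f α (hα.trans hξ)) (f ξ hξ)) : Set (Set X))) = Set.univ

/-- `K` is good: there is a partial play `s` (a sequence of open covers of length `ξ < κ`)
such that `K` is the intersection, over all open covers `𝒞`, of the closures of the unions of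
Bob's responses `σ(s⌢𝒞)`. -/
def BobStratFin.Good {X : Type u} [TopologicalSpace X] {κ : Ordinal.{u}}
    (S : BobStratFin X κ) (K : Set X) : Prop :=
  ∃ (ξ : Ordinal.{u}) (hξ : ξ < κ) (hist : ∀ α : Ordinal.{u}, α < ξ → Set (Set X)),
    (∀ α hα, IsOpenCover (hist α hα)) ∧
    K = ⋂ 𝒞 : {𝒞 : Set (Set X) // IsOpenCover 𝒞},
          closure (⋃₀ (↑(S.move ξ hξ hist 𝒞.1) : Set (Set X)))

/-! A good set is closed, and for every open cover it lies in the closure of the union of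
Bob's finite answer. In a regular space this forces compactness: given an open cover `𝒪` of `K`,
refine the open cover `𝒪 ∪ {Kᶜ}` of the space to the open sets whose closures lie in one of its
members. The closures of finitely many refining sets cover `K`, and each of them that meets `K`
lies in a member of `𝒪`. -/

section ClosureRefinement

variable {X : Type u} [TopologicalSpace X]

def closureRefinement (𝒰 : Set (Set X)) : Set (Set X) :=
  {W | IsOpen W ∧ ∃ V ∈ 𝒰, closure W ⊆ V}

theorem IsOpenCover.closureRefinement [RegularSpace X] {𝒰 : Set (Set X)}
    (h𝒰 : IsOpenCover 𝒰) : IsOpenCover (closureRefinement 𝒰) := by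
  refine ⟨fun W hW => hW.1, Set.eq_univ_of_forall fun x => ?_⟩
  obtain ⟨V, hV, hxV⟩ := Set.mem_sUnion.mp (h𝒰.2.symm ▸ Set.mem_univ x)
  obtain ⟨W, ⟨hxW, hW⟩, hWV⟩ :=
    (hasBasis_opens_closure x).mem_iff.mp ((h𝒰.1 V hV).mem_nhds hxV)
  exact ⟨W, ⟨hW, V, hV, hWV⟩, hxW⟩

theorem isCompact_of_forall_isOpenCover_subset_closure_sUnion [RegularSpace X] {K : Set X}
    (hK : IsClosed K)
    (h : ∀ 𝒞, IsOpenCover 𝒞 → ∃ ℱ ⊆ 𝒞, ℱ.Finite ∧ K ⊆ closure (⋃₀ ℱ)) :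
    IsCompact K := by
  refine isCompact_generateFrom (TopologicalSpace.generateFrom_setOfPred_isOpen _).symm
    fun 𝒪 h𝒪 hK𝒪 => ?_
  have hcover : IsOpenCover (insert Kᶜ 𝒪) := by
    refine ⟨Set.forall_mem_insert.mpr ⟨hK.isOpen_compl, h𝒪⟩, ?_⟩
    rw [Set.sUnion_insert, ← Set.compl_subset_iff_union, compl_compl]
    exact hK𝒪
  obtain ⟨ℱ, hℱ, hℱfin, hKℱ⟩ := h _ hcover.closureRefinement
  choose! g hg𝒪 hgW using fun W (hW : W ∈ ℱ) => (hℱ hW).2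
  refine ⟨g '' ℱ \ {Kᶜ}, ?_, (hℱfin.image g).sdiff, fun x hx => ?_⟩
  · rintro _ ⟨⟨W, hW, rfl⟩, hWK⟩
    exact (Set.mem_insert_iff.mp (hg𝒪 W hW)).resolve_left hWK
  obtain ⟨W, hW, hxW⟩ := Set.mem_iUnion₂.mp ((hℱfin.closure_sUnion ▸ hKℱ) hx)
  have hxg : x ∈ g W := hgW W hW hxW
  exact ⟨g W, ⟨Set.mem_image_of_mem g hW, fun hgK => (hgK ▸ hxg) hx⟩, hxg⟩

end ClosureRefinement

theorem good_isCompact_general {X : Type u} [TopologicalSpace X] [RegularSpace X]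
    {κ : Ordinal.{u}} (S : BobStratFin X κ)
    {K : Set X} (hK : S.Good K) : IsCompact K := by
  obtain ⟨ξ, hξ, hist, -, rfl⟩ := hK
  refine isCompact_of_forall_isOpenCover_subset_closure_sUnion
    (isClosed_iInter fun _ => isClosed_closure) fun 𝒞 h𝒞 => ?_
  exact ⟨_, S.subset ξ hξ hist 𝒞, (S.move ξ hξ hist 𝒞).finite_toSet,
    Set.iInter_subset_of_subset ⟨𝒞, h𝒞⟩ subset_rfl⟩

/-- Every good subset of a regular space is compact. -/
theorem good_isCompact {X : Type u} [TopologicalSpace X] [RegularSpace X]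
    {κ : Ordinal.{u}} (S : BobStratFin X κ) (hS : S.Winning)
    {K : Set X} (hK : S.Good K) : IsCompact K :=
  good_isCompact_general S hK
end

section
/- Let X be a regular topological space with points Gδ such that Bob has a winning strategy in the game G_fin^{ω₁}(O,O). Then |X| ≤ 2^ω. -/
universe u

/-!
For a position `s` of the game let `K(s)` be the intersection, over all open covers `𝒞`, of the
closures of Bob's answers `σ(s⌢𝒞)`. Regularity makes `K(s)` compact; a compact space with points
`Gδ` is first countable, so `|K(s)| ≤ 𝔠` by Arhangel'skii's closing-off argument. Playing one
cover all game long shows that every open cover of `X` has a subcover of size `≤ ℵ₁`, and this,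
together with `|K(s)| ≤ 𝔠`, yields `≤ 𝔠` open covers `G(s)` such that each point outside `K(s)`
avoids `σ(s⌢𝒞)` for some `𝒞 ∈ G(s)`. The positions built from moves in `G` form a tree of height
`ω₁` with `≤ 𝔠^ℵ₀ = 𝔠` nodes per level. Every `x` lies in `K(s)` for some node `s`: otherwise
Alice, always answering with a cover from `G` that keeps `x` out of Bob's selection, would beat
`σ`. Hence `|X| ≤ ℵ₁ · 𝔠 · 𝔠 = 𝔠`.
-/

open Cardinal hiding univ
open Set Filter Topology
open scoped Ordinal

section Cardinal

lemma mk_iUnion_lt_le_of_le {β : Type u} {o : Ordinal.{u}} {c : Cardinal.{u}} (ho : o.card ≤ c)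
    (hc : ℵ₀ ≤ c) (A : ∀ j, j < o → Set β) (hA : ∀ j hj, #(A j hj) ≤ c) :
    #(⋃ j, ⋃ hj : j < o, A j hj) ≤ c := by
  refine (mk_le_mk_of_subset ?_).trans <| mk_biUnion_le_of_le ho hc (fun j => ⋃ hj : j < o, A j hj)
    fun j hj => (mk_le_mk_of_subset (iUnion_subset fun _ => subset_rfl)).trans (hA j hj)
  exact iUnion_mono fun j => iUnion_subset fun hj => subset_iUnion₂_of_subset hj hj subset_rfl

lemma mk_biUnion_le_continuum {γ : Type*} {α : Type u} {T : Set γ} (hT : #T ≤ 𝔠)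
    (A : γ → Set α) (hA : ∀ p ∈ T, #(A p) ≤ 𝔠) : #(⋃ p ∈ T, A p) ≤ 𝔠 := by
  rw [← Cardinal.lift_le, lift_continuum, biUnion_eq_iUnion]
  refine (mk_iUnion_le_lift _).trans ?_
  rw [← continuum_mul_self]
  gcongr
  · simpa using hT
  · exact ciSup_le' fun p => by simpa using hA p p.2

lemma mk_setOf_countable_subset_le_continuum {α : Type u} {B : Set α} (hB : #B ≤ 𝔠) :
    #{A : Set α | A.Countable ∧ A ⊆ B} ≤ 𝔠 := by
  let f : Option (ℕ → B) → Set α := fun o => o.elim ∅ fun u => range fun n => (u n : α)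
  have hsub : {A : Set α | A.Countable ∧ A ⊆ B} ⊆ range f := by
    rintro A ⟨hA, hAB⟩
    rcases A.eq_empty_or_nonempty with rfl | hne
    · exact ⟨none, rfl⟩
    · obtain ⟨u, rfl⟩ := hA.exists_eq_range hne
      exact ⟨some fun n => ⟨u n, hAB (mem_range_self n)⟩, rfl⟩
  calc #{A : Set α | A.Countable ∧ A ⊆ B} ≤ #(range f) := mk_le_mk_of_subset hsub
    _ ≤ #(Option (ℕ → B)) := mk_range_le
    _ = #B ^ ℵ₀ + 1 := by simp [mk_option]
    _ ≤ 𝔠 ^ ℵ₀ + 1 := by grw [power_le_power_right hB]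
    _ = 𝔠 := by rw [continuum_power_aleph0, add_one_eq aleph0_le_continuum]

end Cardinal

section ClosingOff

variable {α : Type u}

def closingOffStage (F : Set α → Set α) (i : Ordinal.{u}) : Set α :=
  ⋃ A ∈ {A : Set α | A.Countable ∧ A ⊆ ⋃ j < i, closingOffStage F j}, F A
termination_by i

lemma mk_closingOffStage_le {F : Set α → Set α} (hF : ∀ A : Set α, A.Countable → #(F A) ≤ 𝔠)
    {i : Ordinal.{u}} (hi : i < ω₁) : #(closingOffStage F i) ≤ 𝔠 := by
  induction i using WellFoundedLT.induction with
  | ind i ih =>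
  have hprev : #(⋃ j < i, closingOffStage F j) ≤ 𝔠 := by
    refine mk_biUnion_le_of_le ?_ aleph0_le_continuum _ fun j hj => ih j hj (hj.trans hi)
    exact (lt_omega_iff_card_lt.1 hi).le.trans aleph_one_le_continuum
  rw [closingOffStage]
  exact mk_biUnion_le_continuum (mk_setOf_countable_subset_le_continuum hprev) _
    fun A hA => hF A hA.1

theorem exists_mk_le_continuum_forall_countable_subset (F : Set α → Set α)
    (hF : ∀ A : Set α, A.Countable → #(F A) ≤ 𝔠) :
    ∃ H : Set α, #H ≤ 𝔠 ∧ ∀ A ⊆ H, A.Countable → F A ⊆ H := by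
  refine ⟨⋃ i < ω₁, closingOffStage F i, ?_, fun A hAH hA => ?_⟩
  · refine mk_biUnion_le_of_le ?_ aleph0_le_continuum _ fun i hi => mk_closingOffStage_le hF hi
    exact (Ordinal.card_omega 1).trans_le aleph_one_le_continuum
  · have : ∀ a : A, ∃ i < ω₁, (a : α) ∈ closingOffStage F i := by
      simpa using fun a ha => hAH ha
    choose i hi hai using this
    have : Countable A := hA.to_subtype
    -- `ω₁` has uncountable cofinality, so the countable set `A` lies below a single stage.
    have hj : ⨆ a, i a + 1 < ω₁ :=
      Ordinal.iSup_lt_omega_one fun a => (isSuccLimit_omega 1).add_one_lt (hi a)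
    refine subset_iUnion₂_of_subset _ hj ?_
    rw [closingOffStage]
    refine subset_biUnion_of_mem (u := F) ⟨hA, fun a ha => ?_⟩
    exact mem_biUnion (Ordinal.lt_iSup_add_one i ⟨a, ha⟩) (hai ⟨a, ha⟩)

end ClosingOff

section Arhangelskii

variable {X : Type u} [TopologicalSpace X]

lemma mk_closure_le_pow_aleph0 [T2Space X] [FrechetUrysohnSpace X] (s : Set X) :
    #(closure s) ≤ #s ^ ℵ₀ := by
  have : ∀ z : closure s, ∃ u : ℕ → s, Tendsto (fun n => (u n : X)) atTop (𝓝 z) := fun z => by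
    obtain ⟨u, hus, hu⟩ := mem_closure_iff_seq_limit.1 z.2
    exact ⟨fun n => ⟨u n, hus n⟩, hu⟩
  choose u hu using this
  have hinj : Function.Injective u := fun z w h =>
    Subtype.ext <| tendsto_nhds_unique (hu z) (h ▸ hu w)
  simpa using mk_le_of_injective hinj

lemma mk_closure_le_continuum [T2Space X] [FrechetUrysohnSpace X] {s : Set X}
    (hs : s.Countable) : #(closure s) ≤ 𝔠 :=
  (mk_closure_le_pow_aleph0 s).trans <| aleph0_power_aleph0 ▸ power_le_power_right hs.le_aleph0

theorem mk_le_continuum_of_firstCountableTopology [CompactSpace X] [T2Space X]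
    [FirstCountableTopology X] : #X ≤ 𝔠 := by
  rcases isEmpty_or_nonempty X with hX | hX
  · simp
  choose b hb using fun x : X => (𝓝 x).exists_antitone_basis
  -- `w V` is a point outside `V` whenever `V ≠ univ`. Closing off under `w`, applied to finite
  -- unions of basic neighbourhoods, forces `H = univ` by compactness.
  let w : Set X → X := fun V => Classical.epsilon (· ∉ V)
  let F : Set X → Set X := fun A => closure A ∪ range fun n : A → ℕ => w (⋃ x : A, b x (n x))
  have hF : ∀ A : Set X, A.Countable → #(F A) ≤ 𝔠 := fun A hA => by
    refine (mk_union_le _ _).trans <|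
      continuum_add_self ▸ add_le_add (mk_closure_le_continuum hA) ?_
    refine mk_range_le.trans ?_
    rw [mk_arrow, mk_nat, lift_aleph0, lift_uzero, ← aleph0_power_aleph0]
    exact power_le_power_left aleph0_ne_zero hA.le_aleph0
  obtain ⟨H, hHc, hH⟩ := exists_mk_le_continuum_forall_countable_subset F hF
  suffices H = univ by simpa [this] using hHc
  have hHclosed : IsClosed H := isClosed_of_closure_subset fun z hz => by
    obtain ⟨u, huH, hu⟩ := mem_closure_iff_seq_limit.1 hz
    exact hH _ (range_subset_iff.2 huH) (countable_range u)
      (Or.inl (mem_closure_of_tendsto hu (Eventually.of_forall fun n => mem_range_self n)))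
  by_contra hne
  obtain ⟨y, hy⟩ := (ne_univ_iff_exists_notMem H).1 hne
  have : ∀ x ∈ H, ∃ n, y ∉ b x n := fun x hx =>
    ((hb x).mem_iff.1 (compl_singleton_mem_nhds (ne_of_mem_of_not_mem hx hy))).imp
      fun _ h hyb => h hyb rfl
  choose! n hn using this
  obtain ⟨t, htH, hHt⟩ := hHclosed.isCompact.elim_nhds_subcover (fun x => b x (n x))
    fun x _ => (hb x).mem (n x)
  set V := ⋃ x : (t : Set X), b x (n x)
  have hyV : y ∉ V := by simpa [V] using fun x hx => hn x (htH x hx)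
  have hwV : w V ∉ V := Classical.epsilon_spec (p := (· ∉ V)) ⟨y, hyV⟩
  have hwH : w V ∈ H := hH _ htH t.countable_toSet (Or.inr ⟨fun x => n x, rfl⟩)
  exact hwV (by simpa [V] using hHt hwH)

end Arhangelskii

section Topology

variable {X : Type u} [TopologicalSpace X]

lemma t1Space_of_isGδ_singleton (h : ∀ x : X, IsGδ {x}) : T1Space X := by
  refine t1Space_iff_exists_open.2 fun x y hxy => ?_
  obtain ⟨T, hTo, -, hxT⟩ := h x
  have : y ∉ ⋂₀ T := hxT ▸ fun hy => hxy (mem_singleton_iff.1 hy).symm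
  obtain ⟨t, ht, hyt⟩ := by simpa only [mem_sInter, not_forall, exists_prop] using this
  exact ⟨t, hTo t ht, (hxT ▸ mem_singleton x : x ∈ ⋂₀ T) t ht, hyt⟩

lemma firstCountableTopology_of_isGδ_singleton [CompactSpace X] [T2Space X]
    (h : ∀ x : X, IsGδ {x}) : FirstCountableTopology X := by
  refine ⟨fun x => ?_⟩
  obtain ⟨T, hTo, hTc, hxT⟩ := h x
  have hxT' : x ∈ ⋂₀ T := hxT ▸ mem_singleton x
  have : ∀ t : T, ∃ C ∈ 𝓝 x, IsClosed C ∧ C ⊆ t := fun t =>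
    exists_mem_nhds_isClosed_subset ((hTo t t.2).mem_nhds (hxT' t t.2))
  choose C hCx hCc hCt using this
  have : Countable T := hTc.to_subtype
  refine HasBasis.isCountablyGenerated (p := fun _ : Finset T => True) (s := fun u => ⋂ t ∈ u, C t)
    ⟨fun O => ⟨fun hO => ?_, fun ⟨u, _, hu⟩ =>
      mem_of_superset ((biInter_finset_mem u).2 fun t _ => hCx t) hu⟩⟩
  have hinter : ∀ y ∈ ⋂ u : Finset T, ⋂ t ∈ u, C t, y = x := fun y hy => by
    have : y ∈ ⋂₀ T := fun t ht =>
      hCt ⟨t, ht⟩ (mem_iInter₂.1 (mem_iInter.1 hy {⟨t, ht⟩}) _ (Finset.mem_singleton_self _))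
    rwa [← hxT, mem_singleton_iff] at this
  obtain ⟨u, hu⟩ := exists_subset_nhds_of_isCompact (V := fun u : Finset T => ⋂ t ∈ u, C t)
    (Antitone.directed_ge fun u v huv => biInter_subset_biInter_left huv)
    (fun u => (isClosed_biInter fun t _ => hCc t).isCompact) fun y hy => hinter y hy ▸ hO
  exact ⟨u, trivial, hu⟩

theorem IsCompact.mk_le_continuum [RegularSpace X] (hGδ : ∀ x : X, IsGδ {x}) {K : Set X}
    (hK : IsCompact K) : #K ≤ 𝔠 := by
  have := t1Space_of_isGδ_singleton hGδ
  have := isCompact_iff_compactSpace.1 hK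
  have := firstCountableTopology_of_isGδ_singleton fun x : K => by
    have := (hGδ x).preimage (continuous_subtype_val (p := (· ∈ K)))
    rwa [← image_singleton, Subtype.val_injective.preimage_image] at this
  exact mk_le_continuum_of_firstCountableTopology

theorem IsCompact.exists_open_supersets_sInter_subset (hGδ : ∀ x : X, IsGδ {x})
    {K : Set X} (hK : IsCompact K) (hKc : #K ≤ 𝔠) :
    ∃ 𝒲 : Set (Set X), #𝒲 ≤ 𝔠 ∧ (∀ W ∈ 𝒲, IsOpen W ∧ K ⊆ W) ∧ ⋂₀ 𝒲 ⊆ K := by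
  choose U hUo hU using fun x => isGδ_iff_eq_iInter_nat.1 (hGδ x)
  let V : Set (K × ℕ) → Set X := fun s => ⋃ p ∈ s, U p.1 p.2
  refine ⟨V '' {s | s.Countable} ∩ {W | K ⊆ W}, ?_, ?_, fun z hz => ?_⟩
  · have hKℕ : #(univ : Set (K × ℕ)) ≤ 𝔠 := by
      rw [mk_univ, mk_prod, lift_uzero, mk_nat, lift_aleph0, ← continuum_mul_self]
      exact mul_le_mul' hKc aleph0_le_continuum
    refine (mk_le_mk_of_subset inter_subset_left).trans <| mk_image_le.trans ?_
    simpa using mk_setOf_countable_subset_le_continuum hKℕ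
  · rintro W ⟨⟨s, -, rfl⟩, hKW⟩
    exact ⟨isOpen_biUnion fun p _ => hUo _ _, hKW⟩
  by_contra hzK
  have hxU : ∀ x n, x ∈ U x n := fun x => mem_iInter.1 (hU x ▸ mem_singleton x)
  have : ∀ x : K, ∃ n, z ∉ U x n := fun x => by
    by_contra! h
    have : z ∈ ({(x : X)} : Set X) := hU x ▸ mem_iInter.2 h
    exact hzK (this ▸ x.2)
  choose n hn using this
  obtain ⟨t, hKt⟩ := hK.elim_nhds_subcover' (fun x hx => U x (n ⟨x, hx⟩))
    fun x hx => (hUo x _).mem_nhds (hxU x _)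
  have hVt : V ((fun x => (x, n x)) '' t) = ⋃ x ∈ t, U x (n x) := biUnion_image
  have hzV := hz _ ⟨⟨_, t.countable_toSet.image _, rfl⟩, hVt ▸ hKt⟩
  rw [hVt, mem_iUnion₂] at hzV
  obtain ⟨x, -, hzx⟩ := hzV
  exact hn x hzx

end Topology

section Covers

variable {X : Type u} [TopologicalSpace X]

lemma isOpenCover_singleton_univ : IsOpenCover ({univ} : Set (Set X)) :=
  ⟨fun _ hU => hU ▸ isOpen_univ, sUnion_singleton _⟩

theorem IsClosed.isCompact_of_forall_subset_closure_sUnion [RegularSpace X] {K : Set X}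
    (hK : IsClosed K)
    (h : ∀ 𝒞 : Set (Set X), IsOpenCover 𝒞 → ∃ 𝒟 ⊆ 𝒞, 𝒟.Finite ∧ K ⊆ closure (⋃₀ 𝒟)) :
    IsCompact K := by
  classical
  refine isCompact_of_finite_subcover fun {ι} U hUo hKU => ?_
  -- By regularity, the open sets whose closures meet `K` only inside finitely many `U i` cover `X`.
  let 𝒲 := {W : Set X | IsOpen W ∧ ∃ t : Finset ι, K ∩ closure W ⊆ ⋃ i ∈ t, U i}
  have h𝒲 : IsOpenCover 𝒲 := by
    refine ⟨fun W hW => hW.1, eq_univ_of_forall fun x => ?_⟩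
    by_cases hx : x ∈ K
    · obtain ⟨i, hi⟩ := mem_iUnion.1 (hKU hx)
      obtain ⟨W, ⟨hxW, hWo⟩, hWU⟩ := (hasBasis_opens_closure x).mem_iff.1 ((hUo i).mem_nhds hi)
      exact ⟨W, ⟨hWo, {i}, fun y hy => by simpa using hWU hy.2⟩, hxW⟩
    · obtain ⟨W, ⟨hxW, hWo⟩, hWK⟩ :=
        (hasBasis_opens_closure x).mem_iff.1 (hK.isOpen_compl.mem_nhds hx)
      exact ⟨W, ⟨hWo, ∅, fun y hy => (hWK hy.2 hy.1).elim⟩, hxW⟩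
  obtain ⟨𝒟, h𝒟𝒲, h𝒟, hK𝒟⟩ := h 𝒲 h𝒲
  choose! t ht using fun W (hW : W ∈ 𝒟) => (h𝒟𝒲 hW).2
  refine ⟨h𝒟.toFinset.biUnion t, fun x hx => ?_⟩
  rw [sUnion_eq_biUnion, h𝒟.closure_biUnion] at hK𝒟
  obtain ⟨W, hW, hxW⟩ := mem_iUnion₂.1 (hK𝒟 hx)
  obtain ⟨i, hi, hxi⟩ := mem_iUnion₂.1 (ht W hW ⟨hx, hxW⟩)
  exact mem_iUnion₂.2 ⟨i, Finset.mem_biUnion.2 ⟨W, h𝒟.mem_toFinset.2 hW, hi⟩, hxi⟩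

-- For a position `s` of the game, `selectionCore (S.move ξ hξ s)` is the good set of
-- `BobStratFin.Good`.
def selectionCore (φ : Set (Set X) → Finset (Set X)) : Set X :=
  ⋂ 𝒞 : {𝒞 : Set (Set X) // IsOpenCover 𝒞}, closure (⋃₀ ↑(φ 𝒞.1))

theorem isCompact_selectionCore [RegularSpace X] {φ : Set (Set X) → Finset (Set X)}
    (hφ : ∀ 𝒞, (↑(φ 𝒞) : Set (Set X)) ⊆ 𝒞) : IsCompact (selectionCore φ) :=
  (isClosed_iInter fun _ => isClosed_closure).isCompact_of_forall_subset_closure_sUnion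
    fun 𝒞 h𝒞 => ⟨φ 𝒞, hφ 𝒞, (φ 𝒞).finite_toSet, iInter_subset_of_subset ⟨𝒞, h𝒞⟩ subset_rfl⟩

def LindelofNumberLE (X : Type u) [TopologicalSpace X] (κ : Cardinal.{u}) : Prop :=
  ∀ 𝒰 : Set (Set X), IsOpenCover 𝒰 → ∃ 𝒮 ⊆ 𝒰, ⋃₀ 𝒮 = univ ∧ #𝒮 ≤ κ

theorem LindelofNumberLE.exists_biInter_subset {κ : Cardinal.{u}} (hL : LindelofNumberLE X κ)
    {ι : Type u} {C : ι → Set X} (hC : ∀ i, IsClosed (C i)) {W : Set X} (hW : IsOpen W)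
    (hCW : ⋂ i, C i ⊆ W) : ∃ J : Set ι, #J ≤ κ ∧ ⋂ i ∈ J, C i ⊆ W := by
  have h𝒰 : IsOpenCover (insert W (range fun i => (C i)ᶜ)) := by
    refine ⟨?_, eq_univ_of_forall fun z => ?_⟩
    · rintro U (rfl | ⟨i, rfl⟩)
      exacts [hW, (hC i).isOpen_compl]
    by_cases hz : z ∈ W
    · exact ⟨W, mem_insert _ _, hz⟩
    · obtain ⟨i, hi⟩ : ∃ i, z ∉ C i := by
        by_contra! h
        exact hz (hCW (mem_iInter.2 h))
      exact ⟨_, mem_insert_of_mem _ ⟨i, rfl⟩, hi⟩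
  obtain ⟨𝒮, h𝒮𝒰, h𝒮, h𝒮κ⟩ := hL _ h𝒰
  obtain ⟨J, hJ, hJinj⟩ := exists_image_eq_injOn_of_subset_range (f := fun i => (C i)ᶜ)
    (t := 𝒮 \ {W}) fun U hU => (h𝒮𝒰 hU.1).resolve_left hU.2
  refine ⟨J, ?_, fun z hz => ?_⟩
  · rw [← mk_image_eq_of_injOn _ _ hJinj, hJ]
    exact (mk_le_mk_of_subset sdiff_subset).trans h𝒮κ
  obtain ⟨U, hU𝒮, hzU⟩ : z ∈ ⋃₀ 𝒮 := h𝒮 ▸ mem_univ z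
  by_contra hzW
  have : U ∈ (fun i => (C i)ᶜ) '' J := hJ ▸ ⟨hU𝒮, fun h => hzW (h ▸ hzU)⟩
  obtain ⟨i, hi, rfl⟩ := this
  exact hzU (mem_iInter₂.1 hz i hi)

theorem IsCompact.exists_mk_le_continuum_biInter_subset [RegularSpace X]
    (hGδ : ∀ x : X, IsGδ {x}) {κ : Cardinal.{u}} (hL : LindelofNumberLE X κ) (hκ : κ ≤ 𝔠)
    {ι : Type u} {C : ι → Set X} (hC : ∀ i, IsClosed (C i)) (hK : IsCompact (⋂ i, C i)) :
    ∃ J : Set ι, #J ≤ 𝔠 ∧ ⋂ i ∈ J, C i ⊆ ⋂ i, C i := by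
  obtain ⟨𝒲, h𝒲c, h𝒲, h𝒲K⟩ := hK.exists_open_supersets_sInter_subset hGδ (hK.mk_le_continuum hGδ)
  choose J hJκ hJ using fun W : 𝒲 => hL.exists_biInter_subset hC (h𝒲 W W.2).1 (h𝒲 W W.2).2
  refine ⟨⋃ W, J W, ?_, fun z hz => h𝒲K fun W hW => hJ ⟨W, hW⟩ ?_⟩
  · refine (mk_iUnion_le _).trans ?_
    rw [← continuum_mul_self]
    exact mul_le_mul' h𝒲c (ciSup_le' fun W => (hJκ W).trans hκ)
  · exact mem_iInter₂.2 fun i hi => mem_iInter₂.1 hz i (mem_iUnion.2 ⟨_, hi⟩)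

theorem exists_open_covers_notMem_sUnion_of_notMem_selectionCore [RegularSpace X]
    (hGδ : ∀ x : X, IsGδ {x}) {κ : Cardinal.{u}} (hL : LindelofNumberLE X κ) (hκ : κ ≤ 𝔠)
    {φ : Set (Set X) → Finset (Set X)} (hφ : ∀ 𝒞, (↑(φ 𝒞) : Set (Set X)) ⊆ 𝒞) :
    ∃ G : Set (Set (Set X)), #G ≤ 𝔠 ∧ (∀ 𝒞 ∈ G, IsOpenCover 𝒞) ∧
      ∀ x, ∃ 𝒞 ∈ G, x ∉ selectionCore φ → x ∉ ⋃₀ ↑(φ 𝒞) := by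
  obtain ⟨J, hJc, hJ⟩ := (isCompact_selectionCore hφ).exists_mk_le_continuum_biInter_subset hGδ hL
    hκ fun 𝒞 => isClosed_closure
  -- The cover `{univ}` serves the points of the core.
  refine ⟨insert {univ} (Subtype.val '' J), ?_, ?_, fun x => ?_⟩
  · refine mk_insert_le.trans ?_
    rw [← add_one_eq aleph0_le_continuum]
    exact add_le_add_left (mk_image_le.trans hJc) 1
  · rintro 𝒞 (rfl | ⟨𝒞, -, rfl⟩)
    exacts [isOpenCover_singleton_univ, 𝒞.2]
  by_cases hx : x ∈ selectionCore φ
  · exact ⟨_, mem_insert _ _, fun h => (h hx).elim⟩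
  obtain ⟨𝒞, h𝒞, hx𝒞⟩ : ∃ 𝒞 ∈ J, x ∉ closure (⋃₀ ↑(φ 𝒞.1)) := by
    by_contra! h
    exact hx (hJ (mem_iInter₂.2 h))
  exact ⟨𝒞.1, mem_insert_of_mem _ ⟨𝒞, h𝒞, rfl⟩, fun _ h => hx𝒞 (subset_closure h)⟩

end Covers

section Tree

variable {β : Type u} {κ : Ordinal.{u}}

def treeLevel (G : ∀ ξ, ξ < κ → (∀ α < ξ, β) → Set β) (ξ : Ordinal.{u}) (hξ : ξ < κ) :
    Set (∀ α < ξ, β) :=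
  {p | ∀ α (hα : α < ξ), p α hα ∈ G α (hα.trans hξ) fun γ hγ => p γ (hγ.trans hα)}

theorem mk_treeLevel_le_continuum {G : ∀ ξ, ξ < κ → (∀ α < ξ, β) → Set β}
    (hG : ∀ ξ hξ p, #(G ξ hξ p) ≤ 𝔠) {ξ : Ordinal.{u}} (hξ : ξ < κ) (hξ₁ : ξ < ω₁) :
    #(treeLevel G ξ hξ) ≤ 𝔠 := by
  induction ξ using WellFoundedLT.induction with
  | ind ξ ih =>
  let moves : Iio ξ → Set β := fun a =>
    ⋃ q ∈ treeLevel G a.1 (a.2.trans hξ), G a.1 (a.2.trans hξ) q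
  have hmoves : ∀ a, #(moves a) ≤ 𝔠 := fun a =>
    mk_biUnion_le_continuum (ih a.1 a.2 _ (a.2.trans hξ₁)) _ fun q _ => hG _ _ q
  let code : treeLevel G ξ hξ → ∀ a, moves a := fun p a =>
    ⟨p.1 a.1 a.2, mem_biUnion (fun γ hγ => p.2 γ (hγ.trans a.2)) (p.2 a.1 a.2)⟩
  have hcode : Function.Injective code := fun p q h => by
    ext α hα
    exact congrArg Subtype.val (congrFun h ⟨α, hα⟩)
  have hξ₀ : #(Iio ξ) ≤ ℵ₀ := by
    rw [mk_Iio_ordinal, ← lift_aleph0.{u + 1, u}, Cardinal.lift_le, ← Order.lt_succ_iff,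
      succ_aleph0]
    exact lt_omega_iff_card_lt.1 hξ₁
  calc #(treeLevel G ξ hξ) ≤ #(∀ a, moves a) := mk_le_of_injective hcode
    _ ≤ prod fun _ : Iio ξ => (𝔠 : Cardinal.{u}) := (mk_pi _).trans_le (prod_le_prod _ _ hmoves)
    _ ≤ 𝔠 ^ ℵ₀ := by
      rw [prod_const, lift_continuum, lift_id'.{u, u + 1}]
      exact power_le_power_left continuum_ne_zero hξ₀
    _ = 𝔠 := continuum_power_aleph0

end Tree

theorem mk_le_continuum_of_forall_mem_treeLevel {β : Type u} {κ : Ordinal.{u}} (hκ : κ ≤ ω₁)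
    {G : ∀ ξ, ξ < κ → (∀ α < ξ, β) → Set β} (hG : ∀ ξ hξ p, #(G ξ hξ p) ≤ 𝔠) {X : Type u}
    {K : ∀ ξ, ξ < κ → (∀ α < ξ, β) → Set X} (hK : ∀ ξ hξ p, #(K ξ hξ p) ≤ 𝔠)
    (hX : ∀ x, ∃ ξ hξ, ∃ p ∈ treeLevel G ξ hξ, x ∈ K ξ hξ p) : #X ≤ 𝔠 := by
  have hcover : (univ : Set X) ⊆ ⋃ ξ, ⋃ hξ : ξ < κ, ⋃ p ∈ treeLevel G ξ hξ, K ξ hξ p :=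
    fun x _ => by simpa only [mem_iUnion, exists_prop] using hX x
  refine mk_univ.symm.trans_le <| (mk_le_mk_of_subset hcover).trans <|
    mk_iUnion_lt_le_of_le ?_ aleph0_le_continuum _ fun ξ hξ =>
      mk_biUnion_le_continuum (mk_treeLevel_le_continuum hG hξ (hξ.trans_le hκ)) _
        fun p _ => hK ξ hξ p
  exact (Ordinal.card_le_card hκ).trans ((Ordinal.card_omega 1).trans_le aleph_one_le_continuum)

namespace BobStratFin

variable {X : Type u} [TopologicalSpace X] {κ : Ordinal.{u}} {S : BobStratFin X κ}

theorem Winning.lindelofNumberLE (hS : S.Winning) (hκ : ℵ₀ ≤ κ.card) :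
    LindelofNumberLE X κ.card := fun 𝒰 h𝒰 => by
  refine ⟨⋃ ξ, ⋃ hξ : ξ < κ, ↑(S.move ξ hξ (fun _ _ => 𝒰) 𝒰), ?_, ?_, ?_⟩
  · exact iUnion₂_subset fun ξ hξ => S.subset ξ hξ _ _
  · simpa only [sUnion_iUnion] using hS (fun _ _ => 𝒰) fun _ _ => h𝒰
  · exact mk_iUnion_lt_le_of_le le_rfl hκ _ fun ξ hξ =>
      (Finset.finite_toSet _).lt_aleph0.le.trans hκ

theorem Winning.exists_mem_treeLevel (hS : S.Winning)
    {G : ∀ ξ, ξ < κ → (∀ α < ξ, Set (Set X)) → Set (Set (Set X))}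
    (hGcov : ∀ ξ hξ p, ∀ 𝒞 ∈ G ξ hξ p, IsOpenCover 𝒞)
    {K : ∀ ξ, ξ < κ → (∀ α < ξ, Set (Set X)) → Set X}
    (hG : ∀ ξ hξ p x, ∃ 𝒞 ∈ G ξ hξ p, x ∉ K ξ hξ p → x ∉ ⋃₀ ↑(S.move ξ hξ p 𝒞)) (x : X) :
    ∃ ξ hξ, ∃ p ∈ treeLevel G ξ hξ, x ∈ K ξ hξ p := by
  -- Alice's play `g` answers from `G`, keeping `x` out of Bob's selection while `x ∉ K`.
  choose c hcG hcK using fun ξ hξ p => hG ξ hξ p x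
  let g : Ordinal.{u} → Set (Set X) :=
    wellFounded_lt.fix fun ξ h => if hξ : ξ < κ then c ξ hξ h else ∅
  have hg : ∀ ξ (hξ : ξ < κ), g ξ = c ξ hξ fun α _ => g α := fun ξ hξ =>
    (wellFounded_lt.fix_eq _ ξ).trans (dif_pos hξ)
  have hwin := hS (fun ξ _ => g ξ) fun ξ hξ => hg ξ hξ ▸ hGcov _ _ _ _ (hcG _ _ _)
  obtain ⟨ξ, hξ, hxξ⟩ : ∃ ξ hξ, x ∈ ⋃₀ ↑(S.move ξ hξ (fun α _ => g α) (g ξ)) := by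
    simpa only [mem_iUnion, exists_prop] using eq_univ_iff_forall.1 hwin x
  refine ⟨ξ, hξ, fun α _ => g α, fun α hα => ?_, ?_⟩
  · show g α ∈ _
    rw [hg α (hα.trans hξ)]
    exact hcG _ _ _
  by_contra hx
  exact hcK ξ hξ _ hx (hg ξ hξ ▸ hxξ)

end BobStratFin

/-- Main theorem: if `X` is a regular space with points `Gδ` and Bob has a winning strategy
in `G_fin^{ω₁}(O,O)`, then `|X| ≤ 2^ω`. -/
theorem card_le_continuum_of_bob_winning {X : Type u} [TopologicalSpace X] [RegularSpace X]
    (hGδ : ∀ x : X, ∃ U : ℕ → Set X, (∀ n, IsOpen (U n)) ∧ (⋂ n, U n) = {x})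
    (S : BobStratFin X (Cardinal.aleph 1).ord) (hS : S.Winning) :
    Cardinal.mk X ≤ Cardinal.continuum.{u} := by
  have hGδ' : ∀ x : X, IsGδ {x} := fun x =>
    let ⟨U, hUo, hU⟩ := hGδ x; isGδ_iff_eq_iInter_nat.2 ⟨U, hUo, hU.symm⟩
  have hL : LindelofNumberLE X ℵ₁ := by
    simpa using hS.lindelofNumberLE (by simp)
  choose G hGc hGcov hG using fun ξ hξ p =>
    exists_open_covers_notMem_sUnion_of_notMem_selectionCore hGδ' hL aleph_one_le_continuum
      (S.subset ξ hξ p)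
  exact mk_le_continuum_of_forall_mem_treeLevel (ord_aleph 1).le hGc
    (fun ξ hξ p => (isCompact_selectionCore (S.subset ξ hξ p)).mk_le_continuum hGδ')
    (hS.exists_mem_treeLevel hGcov hG)
end

section
/- If X is a regular topological space in which every compact subset is a Gδ set and Bob has a winning strategy in the Menger game G_fin(O,O) of length ω, then X is σ-compact. -/
/-!
At a position `h` of the game, let `K(h)` be the set of points lying in the closure of Bob's
answer to every cover Alice may play next. Regularity makes `K(h)` compact. The winning strategy
makes `X` Lindelöf, so, `K(h)` being a `Gδ`, countably many covers already cut `K(h)` out.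
Restricting Alice to these covers leaves countably many positions, and a point outside all of
their cores could be dodged by Alice at every inning, contradicting that Bob wins.
-/

universe u

/-- A strategy for Bob in the Menger game `G_fin(O,O)` of length `ω`: at inning `n`, given the
history of Alice's covers and her current cover, Bob picks a finite subfamily of it. -/
structure BobStratFinNat (X : Type u) [TopologicalSpace X] where
  move : ∀ n : ℕ, (Fin n → Set (Set X)) → Set (Set X) → Finset (Set X)
  subset : ∀ n hist 𝒞, (↑(move n hist 𝒞) : Set (Set X)) ⊆ 𝒞

/-- The strategy is winning: against every sequence of open covers played by Alice, the union
of Bob's selections covers the space. -/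
def BobStratFinNat.Winning {X : Type u} [TopologicalSpace X] (S : BobStratFinNat X) : Prop :=
  ∀ f : ℕ → Set (Set X), (∀ n, IsOpenCover (f n)) →
    (⋃ n, ⋃₀ (↑(S.move n (fun m : Fin n => f m) (f n)) : Set (Set X))) = Set.univ

open Set Filter Topology

section Histories

variable {α : Type*} {C : ∀ n, (Fin n → α) → Set α}

theorem exists_seq_eq_apply_fin (g : ∀ n, (Fin n → α) → α) :
    ∃ f : ℕ → α, ∀ n, f n = g n (fun m : Fin n => f m) :=
  ⟨Nat.strongRec fun n ih => g n fun m => ih m m.2, fun n => Nat.strongRec_eq _ n⟩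

def admissibleHistories (C : ∀ n, (Fin n → α) → Set α) : ∀ n, Set (Fin n → α)
  | 0 => univ
  | n + 1 => ⋃ h ∈ admissibleHistories C n, Fin.snoc h '' C n h

theorem countable_admissibleHistories (hC : ∀ n h, (C n h).Countable) :
    ∀ n, (admissibleHistories C n).Countable
  | 0 => subsingleton_of_subsingleton.countable
  | n + 1 => (countable_admissibleHistories hC n).biUnion fun h _ => (hC n h).image _

theorem exists_seq_mem_admissibleHistories (g : ∀ n, (Fin n → α) → α)
    (hg : ∀ n, ∀ h ∈ admissibleHistories C n, g n h ∈ C n h) :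
    ∃ f : ℕ → α, ∀ n, (fun m : Fin n => f m) ∈ admissibleHistories C n ∧
      f n = g n (fun m : Fin n => f m) := by
  obtain ⟨f, hf⟩ := exists_seq_eq_apply_fin g
  refine ⟨f, fun n => ⟨?_, hf n⟩⟩
  induction n with
  | zero => exact mem_univ _
  | succ n ih =>
    have hsnoc : Fin.snoc (fun m : Fin n => f m) (f n) = fun m : Fin (n + 1) => f m :=
      Fin.snoc_init_self (fun m : Fin (n + 1) => f m)
    exact mem_biUnion ih ⟨f n, hf n ▸ hg n _ ih, hsnoc⟩

end Histories

section Topology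

variable {X : Type u} [TopologicalSpace X]

theorem IsGδ.exists_countable_biInter_eq [LindelofSpace X] {ι : Type*} {t : Set ι}
    {F : ι → Set X} (hF : ∀ i ∈ t, IsClosed (F i)) (hG : IsGδ (⋂ i ∈ t, F i)) :
    ∃ s ⊆ t, s.Countable ∧ ⋂ i ∈ s, F i = ⋂ i ∈ t, F i := by
  obtain ⟨T, hTo, hTc, hT⟩ := hG
  have hsub : ∀ u ∈ T, ∃ s ⊆ t, s.Countable ∧ uᶜ ⊆ ⋃ i ∈ s, (F i)ᶜ := by
    intro u hu
    refine (hTo u hu).isClosed_compl.isLindelof.elim_countable_subcover_image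
      (fun i hi => (hF i hi).isOpen_compl) ?_
    rw [← compl_iInter₂, compl_subset_compl, hT]
    exact sInter_subset_of_mem hu
  choose! s hst hsc hsu using hsub
  refine ⟨⋃ u ∈ T, s u, iUnion₂_subset hst, hTc.biUnion hsc, ?_⟩
  refine (biInter_mono (iUnion₂_subset hst) fun _ _ => subset_rfl).antisymm' ?_
  rw [hT]
  refine subset_sInter fun u hu => ?_
  have hsu' := hsu u hu
  rw [← compl_iInter₂, compl_subset_compl] at hsu'
  exact (biInter_mono (subset_biUnion_of_mem hu) fun _ _ => subset_rfl).trans hsu'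

def selectorCore (sel : Set (Set X) → Finset (Set X)) : Set X :=
  ⋂ 𝒰 ∈ {𝒰 : Set (Set X) | IsOpenCover 𝒰}, closure (⋃₀ (sel 𝒰 : Set (Set X)))

/-- A filter on the core without cluster points would have, by regularity, an open cover `𝒱`
whose closures all have complements in the filter; the finite subfamily selected from `𝒱` then
puts the complement of the core into the filter. -/
theorem isCompact_selectorCore [RegularSpace X] {sel : Set (Set X) → Finset (Set X)}
    (hsel : ∀ 𝒰, (sel 𝒰 : Set (Set X)) ⊆ 𝒰) : IsCompact (selectorCore sel) := by
  set K := selectorCore sel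
  have hK : IsClosed K := isClosed_biInter fun _ _ => isClosed_closure
  intro f hf hfK
  by_contra! hclus
  have hdisj : ∀ x, Disjoint (𝓝 x) f := fun x => by
    by_contra hx
    have hcl : ClusterPt x f := clusterPt_iff_not_disjoint.mpr hx
    exact hclus x (hK.closure_eq ▸ mem_closure_iff_clusterPt.mpr (hcl.mono hfK)) hcl
  set 𝒱 : Set (Set X) := {V | IsOpen V ∧ (closure V)ᶜ ∈ f}
  have h𝒱 : IsOpenCover 𝒱 := by
    refine ⟨fun V hV => hV.1, eq_univ_of_forall fun x => ?_⟩
    obtain ⟨t, ⟨htx, htc⟩, htf⟩ := (closed_nhds_basis x).disjoint_iff_left.mp (hdisj x)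
    refine ⟨interior t, ⟨isOpen_interior, mem_of_superset htf ?_⟩,
      mem_interior_iff_mem_nhds.mpr htx⟩
    exact compl_subset_compl.mpr (closure_minimal interior_subset htc)
  have hcompl : (closure (⋃₀ (sel 𝒱 : Set (Set X))))ᶜ ∈ f := by
    rw [(sel 𝒱).finite_toSet.closure_sUnion, compl_iUnion₂]
    exact (biInter_finset_mem _).mpr fun V hV => (hsel 𝒱 hV).2
  have hKsub : K ⊆ closure (⋃₀ (sel 𝒱 : Set (Set X))) := biInter_subset_of_mem h𝒱
  exact hf.ne (empty_mem_iff_bot.mp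
    (mem_of_superset (inter_mem (le_principal_iff.mp hfK) hcompl) fun x hx => hx.2 (hKsub hx.1)))

end Topology

namespace BobStratFinNat

variable {X : Type u} [TopologicalSpace X] {S : BobStratFinNat X}

theorem Winning.exists_countable_subcover (hS : S.Winning) {𝒰 : Set (Set X)}
    (h𝒰 : IsOpenCover 𝒰) : ∃ 𝒯 ⊆ 𝒰, 𝒯.Countable ∧ ⋃₀ 𝒯 = univ :=
  ⟨⋃ n, S.move n (fun _ => 𝒰) 𝒰, iUnion_subset fun n => S.subset n _ 𝒰,
    countable_iUnion fun n => (S.move n _ 𝒰).countable_toSet,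
    by rw [sUnion_iUnion]; exact hS (fun _ => 𝒰) fun _ => h𝒰⟩

theorem Winning.lindelofSpace (hS : S.Winning) : LindelofSpace X where
  isLindelof_univ := isLindelof_of_countable_subcover fun U hUo hU => by
    obtain ⟨𝒯, h𝒯U, h𝒯c, h𝒯⟩ := hS.exists_countable_subcover
      ⟨forall_mem_range.mpr hUo, univ_subset_iff.mp (sUnion_range U ▸ hU)⟩
    obtain ⟨r, rfl, hinj⟩ := exists_image_eq_injOn_of_subset_range h𝒯U
    refine ⟨r, (mapsTo_image U r).countable_of_injOn hinj h𝒯c, ?_⟩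
    rw [← sUnion_image, h𝒯]

theorem Winning.iUnion_selectorCore_eq_univ (hS : S.Winning)
    {C : ∀ n, (Fin n → Set (Set X)) → Set (Set (Set X))}
    (hC : ∀ n h, C n h ⊆ {𝒰 | IsOpenCover 𝒰})
    (hcore : ∀ n h, ⋂ 𝒰 ∈ C n h, closure (⋃₀ (S.move n h 𝒰 : Set (Set X))) ⊆
      selectorCore (S.move n h)) :
    ⋃ n, ⋃ h ∈ admissibleHistories C n, selectorCore (S.move n h) = univ := by
  refine eq_univ_of_forall fun x => ?_
  by_contra hx
  simp only [mem_iUnion, not_exists] at hx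
  have hescape : ∀ n, ∀ h ∈ admissibleHistories C n,
      ∃ 𝒰 ∈ C n h, x ∉ closure (⋃₀ (S.move n h 𝒰 : Set (Set X))) := fun n h hh => by
    simpa using fun hin => hx n h hh (hcore n h (mem_iInter₂.mpr hin))
  choose! g hgC hgx using hescape
  obtain ⟨f, hf⟩ := exists_seq_mem_admissibleHistories g hgC
  have hplay : ∀ n, IsOpenCover (f n) := fun n => hC _ _ ((hf n).2 ▸ hgC n _ (hf n).1)
  obtain ⟨n, hn⟩ := mem_iUnion.mp (eq_univ_iff_forall.mp (hS f hplay) x)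
  exact hgx n _ (hf n).1 ((hf n).2 ▸ subset_closure hn)

end BobStratFinNat

/-- If `X` is regular, every compact subset of `X` is a `Gδ`, and Bob has a winning strategy
in the Menger game, then `X` is σ-compact. -/
theorem sigmaCompact_of_bob_winning_menger {X : Type u} [TopologicalSpace X] [RegularSpace X]
    (hGδ : ∀ K : Set X, IsCompact K →
      ∃ U : ℕ → Set X, (∀ n, IsOpen (U n)) ∧ (⋂ n, U n) = K)
    (S : BobStratFinNat X) (hS : S.Winning) :
    ∃ K : ℕ → Set X, (∀ n, IsCompact (K n)) ∧ (⋃ n, K n) = Set.univ := by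
  have := hS.lindelofSpace
  have hcompact : ∀ n h, IsCompact (selectorCore (S.move n h)) :=
    fun n h => isCompact_selectorCore (S.subset n h)
  have hwitness : ∀ n h, ∃ C ⊆ {𝒰 : Set (Set X) | IsOpenCover 𝒰}, C.Countable ∧
      ⋂ 𝒰 ∈ C, closure (⋃₀ (S.move n h 𝒰 : Set (Set X))) =
        selectorCore (S.move n h) := by
    intro n h
    obtain ⟨U, hUo, hU⟩ := hGδ _ (hcompact n h)
    exact IsGδ.exists_countable_biInter_eq (fun _ _ => isClosed_closure)
      (hU ▸ IsGδ.iInter_of_isOpen hUo : IsGδ (selectorCore (S.move n h)))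
  choose C hC hCc hCcore using hwitness
  have hσ : IsSigmaCompact (⋃ n, ⋃ h ∈ admissibleHistories C n, selectorCore (S.move n h)) :=
    isSigmaCompact_iUnion _ fun n => isSigmaCompact_biUnion (countable_admissibleHistories hCc n)
      fun h _ => (hcompact n h).isSigmaCompact
  rwa [hS.iUnion_selectorCore_eq_univ hC fun n h => (hCcore n h).le] at hσ
end

section
/- Let X be a topological space, p ∈ X, and σ a strategy for Bob in the tightness game G_1^{ω₁}(Ω_p, Ω_p). Then for every partial play s (a sequence of sets in Ω_p of length < ω₁ together with Bob's responses), there exists a neighbourhood V of p such that for every x ∈ V there is D ∈ Ω_p with σ(s⌢D) = x. -/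
universe u v

open Topology

/-- A strategy for Bob in the tightness game `G_1^κ(Ω_p, Ω_p)`: at inning `ξ < κ`, given the
history of Alice's previous moves and Alice's current set `A` (with `p ∈ closure A`),
Bob picks a point of `A`. -/
structure BobStratOne (X : Type u) [TopologicalSpace X] (p : X) (κ : Ordinal.{v}) where
  move : ∀ ξ : Ordinal.{v}, ξ < κ → (∀ α : Ordinal.{v}, α < ξ → Set X) → Set X → X
  mem : ∀ ξ hξ hist A, p ∈ closure A → move ξ hξ hist A ∈ A

/-- The strategy is winning: for every play by Alice of sets having `p` in their closure,
the set of Bob's chosen points has `p` in its closure. -/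
def BobStratOne.Winning {X : Type u} [TopologicalSpace X] {p : X} {κ : Ordinal.{v}}
    (S : BobStratOne X p κ) : Prop :=
  ∀ f : ∀ ξ : Ordinal.{v}, ξ < κ → Set X, (∀ ξ hξ, p ∈ closure (f ξ hξ)) →
    p ∈ closure {x | ∃ (ξ : Ordinal.{v}) (hξ : ξ < κ),
      S.move ξ hξ (fun α hα => f α (hα.trans hξ)) (f ξ hξ) = x}

/-- For any strategy `σ` for Bob in `G_1^{ω₁}(Ω_p, Ω_p)` and any partial play `s` (a sequence
of sets in `Ω_p` of length `ξ < ω₁`), there is a neighbourhood `V` of `p` such that every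
`x ∈ V` equals `σ(s⌢D)` for some `D ∈ Ω_p`. -/
theorem exists_good_nbhd {X : Type u} [TopologicalSpace X] {p : X}
    (S : BobStratOne.{u, v} X p (Cardinal.aleph 1).ord)
    (ξ : Ordinal.{v}) (hξ : ξ < (Cardinal.aleph 1).ord)
    (hist : ∀ α : Ordinal.{v}, α < ξ → Set X)
    (hhist : ∀ α hα, p ∈ closure (hist α hα)) :
    ∃ V ∈ 𝓝 p, ∀ x ∈ V, ∃ D : Set X, p ∈ closure D ∧ S.move ξ hξ hist D = x := by
  by_contra h
  push_neg at h
  set T : Set X := {x | ∀ D : Set X, p ∈ closure D → S.move ξ hξ hist D ≠ x} with hT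
  have hpT : p ∈ closure T := by
    rw [mem_closure_iff_nhds]
    intro V hV
    obtain ⟨x, hxV, hx⟩ := h V hV
    exact ⟨x, hxV, fun D hD => hx D hD⟩
  have hmem := S.mem ξ hξ hist T hpT
  exact hmem T hpT rfl
end

section
/- In any tree, every uncountable subset contains either an uncountable chain or an infinite antichain. -/
/-!
Call `b` *big* when `A ∩ Ici b` is uncountable, and suppose every chain in `A` is countable and
every antichain in `A` is finite. In a well-founded order a set whose antichains are finite is
the union of the cones above its finitely many minimal elements, so the non-big elements of any
uncountable cone `A ∩ Ici b` form a countable set. Hence the big elements of that cone are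
uncountable, so they are not a chain, and above every big `b` there are two incomparable elements
`p, q ∈ A` with `p` big. Iterating from `p` yields a sequence of `q`'s, and since the predecessors
of any element are linearly ordered these `q`'s are pairwise incomparable: an infinite antichain.
-/

universe u

open Set

section WellFoundedLT

variable {α : Type*} [PartialOrder α]

theorem wellFoundedLT_of_forall_wellFounded_Iio
    (h : ∀ t : α, WellFounded fun a b : Iio t => (a : α) < b) : WellFoundedLT α := by
  refine ⟨⟨fun t => ⟨t, fun s hst => ?_⟩⟩⟩
  have hacc : ∀ a : Iio t, Acc (· < ·) (a : α) := fun a =>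
    (h t).induction (C := fun a : Iio t => Acc (· < ·) (a : α)) a
      fun a ih => ⟨(a : α), fun c (hca : c < a) => ih ⟨c, hca.trans a.2⟩ hca⟩
  exact hacc ⟨s, hst⟩

variable [WellFoundedLT α]

theorem countable_of_forall_countable_inter_Ici {S : Set α}
    (hS : ∀ D ⊆ S, IsAntichain (· ≤ ·) D → D.Finite)
    (h : ∀ s ∈ S, (S ∩ Ici s).Countable) : S.Countable := by
  have hmin : {m | Minimal (· ∈ S) m}.Finite :=
    hS _ (fun m hm => hm.prop) (setOfPred_minimal_antichain _)
  have hcover : S ⊆ ⋃ m ∈ {m | Minimal (· ∈ S) m}, S ∩ Ici m := by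
    intro s hs
    obtain ⟨m, hms, hm⟩ := exists_minimal_le_of_wellFoundedLT (· ∈ S) s hs
    exact mem_biUnion hm ⟨hs, hms⟩
  exact (hmin.countable.biUnion fun m hm => h m hm.prop).mono hcover

theorem not_countable_setOf_not_countable_inter_Ici {S : Set α}
    (hS : ∀ D ⊆ S, IsAntichain (· ≤ ·) D → D.Finite) (hSc : ¬ S.Countable) :
    ¬ {s ∈ S | ¬ (S ∩ Ici s).Countable}.Countable := by
  set B := {s ∈ S | ¬ (S ∩ Ici s).Countable}
  intro hB
  have hrest : (S \ B).Countable :=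
    countable_of_forall_countable_inter_Ici (fun D hD => hS D (hD.trans sdiff_subset))
      fun s hs => (of_not_not (not_and.mp hs.2 hs.1)).mono
        (inter_subset_inter_left _ sdiff_subset)
  exact hSc ((hB.union hrest).mono fun s hs => by by_cases hsB : s ∈ B <;> simp [hs, hsB])

theorem exists_incomparable_above_of_not_countable {A : Set α}
    (hanti : ∀ D ⊆ A, IsAntichain (· ≤ ·) D → D.Finite)
    (hchain : ∀ C ⊆ A, IsChain (· ≤ ·) C → C.Countable) {b : α}
    (hb : ¬ (A ∩ Ici b).Countable) :
    ∃ p, ¬ (A ∩ Ici p).Countable ∧ b ≤ p ∧ ∃ q ∈ A, b ≤ q ∧ ¬ p ≤ q ∧ ¬ q ≤ p := by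
  set S := A ∩ Ici b
  have hbig : ¬ {s ∈ S | ¬ (S ∩ Ici s).Countable}.Countable :=
    not_countable_setOf_not_countable_inter_Ici
      (fun D hD => hanti D (hD.trans inter_subset_left)) hb
  have hnot : ¬ IsChain (· ≤ ·) {s ∈ S | ¬ (S ∩ Ici s).Countable} := fun h =>
    hbig (hchain _ (fun s hs => hs.1.1) h)
  simp only [IsChain, Set.Pairwise, not_forall] at hnot
  obtain ⟨p, ⟨⟨-, hbp⟩, hp⟩, q, ⟨⟨hqA, hbq⟩, -⟩, -, hpq⟩ := hnot
  exact ⟨p, fun h => hp (h.mono (inter_subset_inter_left _ inter_subset_left)), hbp,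
    q, hqA, hbq, not_or.mp hpq⟩

end WellFoundedLT

section Tree

variable {α : Type*} [PartialOrder α]

theorem isChain_Iic_of_forall_trichotomous_Iio
    (h : ∀ t : α, Std.Trichotomous fun a b : Iio t => (a : α) < b) (t : α) :
    IsChain (· ≤ ·) (Iic t) := by
  intro a ha b hb _
  rcases ha.lt_or_eq with hat | rfl
  · rcases hb.lt_or_eq with hbt | rfl
    · rcases trichotomous_of (fun a b : Iio t => (a : α) < b) ⟨a, hat⟩ ⟨b, hbt⟩ with h | h | h
      · exact Or.inl h.le
      · exact Or.inl (congrArg Subtype.val h).le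
      · exact Or.inr h.le
    · exact Or.inl ha
  · exact Or.inr hb

theorem incomparable_of_incomparable_succ (hα : ∀ t : α, IsChain (· ≤ ·) (Iic t))
    {x c : ℕ → α} (hx : Monotone x) (hxc : ∀ n, x n ≤ c n)
    (hc : ∀ n, ¬ x (n + 1) ≤ c n ∧ ¬ c n ≤ x (n + 1)) {i j : ℕ} (hij : i < j) :
    ¬ c i ≤ c j ∧ ¬ c j ≤ c i := by
  have hxcj : x (i + 1) ≤ c j := (hx hij).trans (hxc j)
  exact ⟨fun hle => ((hα (c j)).total hxcj hle).elim (hc i).1 (hc i).2,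
    fun hle => (hc i).1 (hxcj.trans hle)⟩

theorem exists_infinite_antichain_of_forall_exists_incomparable
    (hα : ∀ t : α, IsChain (· ≤ ·) (Iic t)) {P : α → Prop} {A : Set α}
    (h : ∀ b, P b → ∃ p, P p ∧ b ≤ p ∧ ∃ q ∈ A, b ≤ q ∧ ¬ p ≤ q ∧ ¬ q ≤ p)
    {x₀ : α} (hx₀ : P x₀) : ∃ D ⊆ A, IsAntichain (· ≤ ·) D ∧ D.Infinite := by
  choose! next hnextP hle q hqA hleq hpq hqp using h
  set x : ℕ → α := fun n => next^[n] x₀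
  have hxsucc : ∀ n, x (n + 1) = next (x n) := fun n => Function.iterate_succ_apply' _ _ _
  have hxP : ∀ n, P (x n) := fun n => by
    induction n with
    | zero => exact hx₀
    | succ n ih => exact hxsucc n ▸ hnextP _ ih
  have hinc : ∀ {i j}, i < j → ¬ q (x i) ≤ q (x j) ∧ ¬ q (x j) ≤ q (x i) :=
    incomparable_of_incomparable_succ hα
      (monotone_nat_of_le_succ fun n => (hxsucc n).symm ▸ hle _ (hxP n))
      (fun n => hleq _ (hxP n))
      (fun n => (hxsucc n).symm ▸ ⟨hpq _ (hxP n), hqp _ (hxP n)⟩)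
  have hinj : Function.Injective (q ∘ x) := fun i j hij => by
    by_contra hne
    rcases lt_or_gt_of_ne hne with h | h
    · exact (hinc h).1 hij.le
    · exact (hinc h).2 hij.le
  refine ⟨range (q ∘ x), range_subset_iff.mpr fun n => hqA _ (hxP n), ?_,
    infinite_range_of_injective hinj⟩
  rintro _ ⟨i, rfl⟩ _ ⟨j, rfl⟩ hne
  rcases lt_or_gt_of_ne (fun h : i = j => hne (h ▸ rfl)) with h | h
  · exact (hinc h).1
  · exact (hinc h).2

end Tree

/-- In any tree (a partial order in which the set of predecessors of each element is
well-ordered), every uncountable subset contains either an uncountable chain or an infinite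
antichain. -/
theorem uncountable_subset_of_tree {T : Type u} [PartialOrder T]
    (htree : ∀ t : T, IsWellOrder (Set.Iio t) (fun a b => (a : T) < b))
    (A : Set T) (hA : ¬ A.Countable) :
    (∃ C ⊆ A, IsChain (· ≤ ·) C ∧ ¬ C.Countable) ∨
    (∃ D ⊆ A, IsAntichain (· ≤ ·) D ∧ D.Infinite) := by
  have : WellFoundedLT T := wellFoundedLT_of_forall_wellFounded_Iio fun t => (htree t).wf
  rw [or_iff_not_imp_left]
  intro hchain
  push Not at hchain
  by_contra hanti
  push Not at hanti
  obtain ⟨x₀, -, hx₀⟩ : {s ∈ A | ¬ (A ∩ Ici s).Countable}.Nonempty :=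
    Set.Infinite.nonempty fun h => not_countable_setOf_not_countable_inter_Ici hanti hA h.countable
  obtain ⟨D, hDA, hD, hDinf⟩ := exists_infinite_antichain_of_forall_exists_incomparable
    (isChain_Iic_of_forall_trichotomous_Iio fun t => (htree t).toTrichotomous)
    (fun b hb => exists_incomparable_above_of_not_countable hanti hchain hb) hx₀
  exact hDinf (hanti D hDA hD)
end
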